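/- arXiv:1812.01700 — 4 statements merged into one kernel-verified Lean document; each statement's English description precedes it below -/
import Mathlib

section
/- The Fourier transform of the box spline B_V equals the product over v ∈ V of g(ξ·v), where g(t) = (1 - e^{-2πit})/(2πit). -/
/-
The box spline is the push-forward of Lebesgue measure on the cube `[0,1]^n` under the linear
map `u ↦ ∑ⱼ uⱼ vⱼ`. Testing it against the character `x ↦ e^{-2πi ξ·x}` therefore gives the
integral over the cube of `e^{-2πi ∑ⱼ uⱼ (vⱼ·ξ)} = ∏ⱼ e^{-2πi (vⱼ·ξ) uⱼ}`, which factors by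
Fubini into one-dimensional integrals `∫₀¹ e^{-2πi c t} dt = g(c)`.
-/

open MeasureTheory Complex Finset
open scoped Real Classical

noncomputable section

/-- `g(t) = (1 - e^{-2πit})/(2πit)` with `g(0) = 1`. -/
def gfun (t : ℝ) : ℂ :=
  if t = 0 then 1 else
    (1 - Complex.exp (-2 * Real.pi * Complex.I * t)) / (2 * Real.pi * Complex.I * t)

variable {d : ℕ} {ι : Type*}

/-- dot product of an integer vector with a real vector -/
def dotIR (α : Fin d → ℤ) (x : Fin d → ℝ) : ℝ := ∑ i, (α i : ℝ) * x i

/-- integer dot product -/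
def dotII (α w : Fin d → ℤ) : ℤ := ∑ i, α i * w i

/-- cast of an integer vector to a real vector -/
def castV (v : Fin d → ℤ) : Fin d → ℝ := fun i => (v i : ℝ)

/-- `V` (indexed by the finset `V` via `v`) consists of nonzero integer vectors spanning `ℝ^d` -/
def Admissible (V : Finset ι) (v : ι → Fin d → ℤ) : Prop :=
  (∀ j ∈ V, v j ≠ 0) ∧
    Submodule.span ℝ ((fun j => castV (v j)) '' (V : Set ι)) = ⊤

/-- `ϱ_V` : the largest `r` such that deleting any `r` vectors leaves a spanning set. -/
def rhoV (V : Finset ι) (v : ι → Fin d → ℤ) : ℕ :=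
  sSup {r : ℕ | ∀ W ⊆ V, W.card = r →
    Submodule.span ℝ ((fun j => castV (v j)) '' ((V \ W : Finset ι) : Set ι)) = ⊤}

/-- membership in the family `Λ` -/
def InLambda (V : Finset ι) (v : ι → Fin d → ℤ) (U : Finset ι) : Prop :=
  U ⊆ V ∧ U.card = rhoV V v + 1 ∧
    Submodule.span ℝ ((fun j => castV (v j)) '' ((V \ U : Finset ι) : Set ι)) ≠ ⊤

/-- unimodularity: every `d`-subfamily has determinant of absolute value at most 1 -/
def Unimodular (V : Finset ι) (v : ι → Fin d → ℤ) : Prop :=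
  ∀ w : Fin d → ι, Function.Injective w → (∀ i, w i ∈ V) →
    |Matrix.det (fun i k => v (w i) k)| ≤ 1

/-- the Fourier transform of the box spline, `∏_{v∈V} g(x⋅v)` -/
def hatB (V : Finset ι) (v : ι → Fin d → ℤ) (x : Fin d → ℝ) : ℂ :=
  ∏ j ∈ V, gfun (dotIR (v j) x)

/-- partial derivative in direction `i` -/
def pderivC (i : Fin d) (f : (Fin d → ℝ) → ℂ) : (Fin d → ℝ) → ℂ :=
  fun x => fderiv ℝ f x (Pi.single i 1)

/-- `D^β`, the multi-index partial derivative -/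
def Dmulti (β : Fin d → ℕ) (f : (Fin d → ℝ) → ℂ) : (Fin d → ℝ) → ℂ :=
  (List.finRange d).foldr (fun i F => (pderivC i)^[β i] F) f

/-- directional derivative `D_w` -/
def dirDeriv (w : Fin d → ℝ) (f : (Fin d → ℝ) → ℂ) : (Fin d → ℝ) → ℂ :=
  fun x => fderiv ℝ f x w

/-- `D_U = ∏_{v∈U} D_v` (real vectors version) -/
def DUder (U : Finset ι) (v : ι → Fin d → ℝ) (f : (Fin d → ℝ) → ℂ) : (Fin d → ℝ) → ℂ :=
  U.toList.foldr (fun j F => dirDeriv (v j) F) f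

/-- the `k`-th Bernoulli function `B^k(t) = ∑_{n≠0} e^{2πint}/(2πin)^k` -/
def Bern (k : ℕ) (t : ℝ) : ℂ :=
  ∑' n : ℤ, if n = 0 then 0 else
    Complex.exp (2 * Real.pi * Complex.I * n * t) / (2 * Real.pi * Complex.I * n) ^ k

/-- the Bernoulli spline `B(V,U)` -/
def BVU (V U : Finset ι) (v : ι → Fin d → ℤ) (x : Fin d → ℝ) : ℂ :=
  ∑' α : Fin d → ℤ,
    if α ≠ 0 ∧ ∀ j ∈ V \ U, dotII α (v j) = 0 then
      (∏ j ∈ U, (1 : ℂ) / (2 * Real.pi * Complex.I * (dotII α (v j) : ℤ))) *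
        Complex.exp (2 * Real.pi * Complex.I * dotIR α x)
    else 0

/-- the homogeneous polynomial `x ↦ ∏_{v∈U}(x⋅v)` (real vectors version) -/
def polyU (U : Finset ι) (v : ι → Fin d → ℝ) (x : Fin d → ℝ) : ℂ :=
  ∏ j ∈ U, ((∑ i, x i * v j i : ℝ) : ℂ)

/-- `C(β,U) = D^β (∏_{v∈U} (x⋅v))`, a constant (evaluated at `0`) -/
def Cconst (U : Finset ι) (v : ι → Fin d → ℤ) (β : Fin d → ℕ) : ℂ :=
  Dmulti β (polyU U fun j => castV (v j)) 0

/-- `L_β`, given by its Fourier expansion (Lemma 2.1);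
equals `P([]^β) - []^β` for the box-spline orthogonal projection `P`. -/
def Lfun (V : Finset ι) (v : ι → Fin d → ℤ) (β : Fin d → ℕ) (x : Fin d → ℝ) : ℂ :=
  (1 / (2 * Real.pi * Complex.I)) ^ (∑ i, β i) *
    ∑' α : Fin d → ℤ, if α ≠ 0 then
      Dmulti β (hatB V v) (castV α) *
        Complex.exp (2 * Real.pi * Complex.I * dotIR α x)
    else 0

/-- the unit cube in `ℝ^d` -/
def unitCube (d : ℕ) : Set (Fin d → ℝ) := Set.univ.pi fun _ : Fin d => Set.Icc (0:ℝ) 1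

theorem setIntegral_univ_pi_prod_eq_prod {𝕜 : Type*} [Fintype ι] [RCLike 𝕜] {E : ι → Type*}
    [∀ i, MeasurableSpace (E i)] {μ : (i : ι) → Measure (E i)} [∀ i, SigmaFinite (μ i)]
    (s : (i : ι) → Set (E i)) (f : (i : ι) → E i → 𝕜) :
    ∫ x in Set.univ.pi s, ∏ i, f i (x i) ∂Measure.pi μ = ∏ i, ∫ x in s i, f i x ∂μ i := by
  rw [Measure.restrict_pi_pi]
  exact integral_fintype_prod_eq_prod f

theorem integral_Icc_cexp_neg_two_pi_I_mul (c : ℝ) :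
    ∫ t in Set.Icc (0 : ℝ) 1, cexp (-2 * π * I * c * t) = gfun c := by
  rw [integral_Icc_eq_integral_Ioc, ← intervalIntegral.integral_of_le zero_le_one]
  by_cases hc : c = 0
  · simp [hc, gfun]
  · have hc' : (-2 * π * I * c : ℂ) ≠ 0 := by simp [Real.pi_ne_zero, hc]
    rw [integral_exp_mul_complex hc']
    simp only [gfun, hc, if_false, ofReal_zero, ofReal_one, mul_zero, mul_one, exp_zero]
    rw [div_eq_div_iff hc' (by simpa using hc')]
    ring

theorem cexp_neg_two_pi_I_dot_sum_smul_eq_prod {n : ℕ} (v : Fin n → Fin d → ℤ) (ξ : Fin d → ℝ)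
    (u : Fin n → ℝ) :
    cexp (-2 * π * I * ((∑ i, ξ i * ∑ j, u j * (v j i : ℝ) : ℝ) : ℂ)) =
      ∏ j, cexp (-2 * π * I * (dotIR (v j) ξ) * u j) := by
  have hdot : ∑ i, ξ i * ∑ j, u j * (v j i : ℝ) = ∑ j, dotIR (v j) ξ * u j := by
    simp only [dotIR, Finset.mul_sum, Finset.sum_mul]
    rw [Finset.sum_comm]
    exact Finset.sum_congr rfl fun j _ => Finset.sum_congr rfl fun i _ => by ring
  rw [hdot, ← exp_sum]
  push_cast
  rw [Finset.mul_sum]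
  exact congrArg cexp (Finset.sum_congr rfl fun j _ => by ring)

theorem statement1_general {d n : ℕ} (v : Fin n → Fin d → ℤ)
    (B : (Fin d → ℝ) → ℝ)
    (hB : ∀ f : (Fin d → ℝ) → ℂ, Continuous f →
      ∫ x, f x * (B x : ℂ) =
        ∫ u in (Set.univ.pi fun _ : Fin n => Set.Icc (0:ℝ) 1),
          f (fun i => ∑ j, u j * (v j i : ℝ)))
    (ξ : Fin d → ℝ) :
    ∫ x, (B x : ℂ) * Complex.exp (-2 * Real.pi * Complex.I * (∑ i, ξ i * x i)) =
      ∏ j : Fin n, gfun (dotIR (v j) ξ) := by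
  have hchar : Continuous fun x : Fin d → ℝ => cexp (-2 * π * I * ((∑ i, ξ i * x i : ℝ) : ℂ)) :=
    continuous_exp.comp (continuous_const.mul (continuous_ofReal.comp (by fun_prop)))
  calc ∫ x, (B x : ℂ) * cexp (-2 * π * I * (∑ i, ξ i * x i))
      = ∫ x, cexp (-2 * π * I * ((∑ i, ξ i * x i : ℝ) : ℂ)) * (B x : ℂ) := by
        simp only [mul_comm, ofReal_sum, ofReal_mul]
    _ = ∫ u in Set.univ.pi fun _ : Fin n => Set.Icc (0 : ℝ) 1,
          ∏ j, cexp (-2 * π * I * (dotIR (v j) ξ) * u j) := by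
        simp only [hB _ hchar, cexp_neg_two_pi_I_dot_sum_smul_eq_prod]
    _ = ∏ j, ∫ t in Set.Icc (0 : ℝ) 1, cexp (-2 * π * I * (dotIR (v j) ξ) * t) :=
        setIntegral_univ_pi_prod_eq_prod _ fun j (t : ℝ) => cexp (-2 * π * I * (dotIR (v j) ξ) * t)
    _ = ∏ j, gfun (dotIR (v j) ξ) := by
        simp only [integral_Icc_cexp_neg_two_pi_I_mul]

/-- the Fourier transform of the box spline is `∏_{v∈V} g(ξ⋅v)`. -/
theorem statement1 {d n : ℕ} (v : Fin n → Fin d → ℤ)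
    (hv : ∀ j, v j ≠ 0)
    (hspan : Submodule.span ℝ (Set.range fun j => castV (v j)) = ⊤)
    (B : (Fin d → ℝ) → ℝ)
    (hB : ∀ f : (Fin d → ℝ) → ℂ, Continuous f →
      ∫ x, f x * (B x : ℂ) =
        ∫ u in (Set.univ.pi fun _ : Fin n => Set.Icc (0:ℝ) 1),
          f (fun i => ∑ j, u j * (v j i : ℝ)))
    (ξ : Fin d → ℝ) :
    ∫ x, (B x : ℂ) * Complex.exp (-2 * Real.pi * Complex.I * (∑ i, ξ i * x i)) =
      ∏ j : Fin n, gfun (dotIR (v j) ξ) :=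
  statement1_general v B hB ξ

end
end

section
/- Let V be unimodular admissible and α ∈ ℤ^d \ {0}, and set U_α = {v ∈ V : α·v ≠ 0}. If D^β B̂_V(α) ≠ 0 for some multi-index β with |β| = ϱ_V + 1 and #U_α ≥ ϱ_V + 1, then #U_α = ϱ_V + 1. -/
open MeasureTheory Complex Finset
open scoped Real Classical

noncomputable section

variable {d : ℕ} {ι : Type*}

/-! Every factor `g(α·v)` with `α·v ∈ ℤ \ {0}` vanishes at `α`, so `B̂_V` is a smooth function
times `#U_α` smooth functions vanishing at `α`: it lies in the `#U_α`-th power of the ideal of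
smooth functions vanishing at `α`. By the Leibniz rule each partial derivative lowers this power
by at most one, so a derivative of order `ϱ_V + 1 < #U_α` still vanishes at `α`. -/

open scoped ContDiff

theorem gfun_eq_dslope (t : ℝ) :
    gfun t = dslope (fun z : ℂ => (1 - exp (-2 * π * I * z)) / (2 * π * I)) 0 t := by
  have h2πI : (2 * π * I : ℂ) ≠ 0 := by simp [Real.pi_ne_zero]
  rcases eq_or_ne t 0 with rfl | ht
  · have hderiv : HasDerivAt (fun z : ℂ => (1 - exp (-2 * π * I * z)) / (2 * π * I)) 1 0 := by
      refine ((((hasDerivAt_id (0 : ℂ)).const_mul (-2 * π * I : ℂ)).cexp.const_sub 1).div_const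
        (2 * π * I)).congr_deriv ?_
      simp [h2πI]
    rw [ofReal_zero, dslope_same, hderiv.deriv]
    simp [gfun]
  · have ht' : (t : ℂ) ≠ 0 := by exact_mod_cast ht
    rw [gfun, if_neg ht, dslope_of_ne _ ht', slope_def_field]
    field_simp
    simp [mul_comm]

theorem contDiff_gfun : ContDiff ℝ ∞ gfun := by
  have hdiff :
      Differentiable ℂ (dslope (fun z : ℂ => (1 - exp (-2 * π * I * z)) / (2 * π * I)) 0) :=
    differentiableOn_univ.mp <| (Complex.differentiableOn_dslope Filter.univ_mem).mpr <|
      (by fun_prop : Differentiable ℂ _).differentiableOn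
  rw [funext gfun_eq_dslope]
  exact (hdiff.contDiff.restrict_scalars ℝ).comp ofRealCLM.contDiff

theorem gfun_intCast_eq_zero {n : ℤ} (hn : n ≠ 0) : gfun n = 0 := by
  have hexp : exp (-2 * π * I * (n : ℝ)) = 1 := by
    rw [← Complex.exp_int_mul_two_pi_mul_I (-n)]
    push_cast
    ring_nf
  rw [gfun, if_neg (by exact_mod_cast hn), hexp, sub_self, zero_div]

theorem contDiff_gfun_dotIR (w : Fin d → ℤ) : ContDiff ℝ ∞ fun x => gfun (dotIR w x) :=
  contDiff_gfun.comp (by unfold dotIR; fun_prop)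

theorem dotIR_castV (w α : Fin d → ℤ) : dotIR w (castV α) = dotII α w := by
  simp [dotIR, dotII, castV, mul_comm]

/-- `f ∈ 𝔪ₐ ^ m`, where `𝔪ₐ` is the ideal of functions vanishing at `a` in the ring of smooth
functions `E → 𝔸`. -/
inductive VanishesToOrder (𝕜 : Type*) {E 𝔸 : Type*} [NontriviallyNormedField 𝕜]
    [NormedAddCommGroup E] [NormedSpace 𝕜 E] [NormedCommRing 𝔸] [NormedAlgebra 𝕜 𝔸] (a : E) :
    ℕ → (E → 𝔸) → Prop
  | of_contDiff {f : E → 𝔸} : ContDiff 𝕜 ∞ f → VanishesToOrder 𝕜 a 0 f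
  | mul {m : ℕ} {p f : E → 𝔸} : ContDiff 𝕜 ∞ p → p a = 0 → VanishesToOrder 𝕜 a m f →
      VanishesToOrder 𝕜 a (m + 1) (p * f)
  | add {m : ℕ} {f g : E → 𝔸} : VanishesToOrder 𝕜 a m f → VanishesToOrder 𝕜 a m g →
      VanishesToOrder 𝕜 a m (f + g)

section Smooth

variable {𝕜 E 𝔸 : Type*} [NontriviallyNormedField 𝕜] [NormedAddCommGroup E] [NormedSpace 𝕜 E]
  [NormedCommRing 𝔸] [NormedAlgebra 𝕜 𝔸]

namespace VanishesToOrder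

variable {a : E} {m : ℕ} {f : E → 𝔸}

theorem contDiff (h : VanishesToOrder 𝕜 a m f) : ContDiff 𝕜 ∞ f := by
  induction h with
  | of_contDiff hf => exact hf
  | mul hp _ _ ih => exact hp.mul ih
  | add _ _ ihf ihg => exact ihf.add ihg

theorem apply_eq_zero (h : VanishesToOrder 𝕜 a m f) (hm : m ≠ 0) : f a = 0 := by
  induction h with
  | of_contDiff _ => exact absurd rfl hm
  | mul _ hpa _ _ => simp [hpa]
  | add _ _ ihf ihg => simp [ihf hm, ihg hm]

theorem contDiff_mul {c : E → 𝔸} (hc : ContDiff 𝕜 ∞ c) (h : VanishesToOrder 𝕜 a m f) :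
    VanishesToOrder 𝕜 a m (c * f) := by
  induction h with
  | of_contDiff hf => exact of_contDiff (hc.mul hf)
  | mul hp hpa _ ih => rw [mul_left_comm]; exact mul hp hpa ih
  | add _ _ ihf ihg => rw [mul_add]; exact add ihf ihg

theorem fderiv_apply (h : VanishesToOrder 𝕜 a m f) (w : E) :
    VanishesToOrder 𝕜 a (m - 1) fun x => fderiv 𝕜 f x w := by
  induction h with
  | of_contDiff hf => exact of_contDiff ((hf.fderiv_right le_rfl).clm_apply contDiff_const)
  | @mul m p f hp hpa hf ih =>
    have hleibniz : (fun x => fderiv 𝕜 (p * f) x w) =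
        p * (fun x => fderiv 𝕜 f x w) + f * fun x => fderiv 𝕜 p x w := by
      ext x
      simp [fderiv_mul (hp.differentiable (by simp) x) (hf.contDiff.differentiable (by simp) x)]
    have hp' : ContDiff 𝕜 ∞ fun x => fderiv 𝕜 p x w :=
      (hp.fderiv_right le_rfl).clm_apply contDiff_const
    rw [hleibniz, Nat.add_sub_cancel]
    refine add ?_ (mul_comm f _ ▸ contDiff_mul hp' hf)
    -- `p` vanishes at `a`, so `p · D_w f` regains the order that `D_w f` lost.
    cases m with
    | zero => exact of_contDiff (hp.mul ih.contDiff)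
    | succ k => exact mul hp hpa ih
  | @add m f g hf hg ihf ihg =>
    have hsum : (fun x => fderiv 𝕜 (f + g) x w) =
        (fun x => fderiv 𝕜 f x w) + fun x => fderiv 𝕜 g x w := by
      ext x
      simp [fderiv_add (hf.contDiff.differentiable (by simp) x)
        (hg.contDiff.differentiable (by simp) x)]
    rw [hsum]
    exact add ihf ihg

theorem iterate_fderiv_apply (h : VanishesToOrder 𝕜 a m f) (w : E) (k : ℕ) :
    VanishesToOrder 𝕜 a (m - k) ((fun F x => fderiv 𝕜 F x w)^[k] f) := by
  induction k with
  | zero => exact h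
  | succ k ih =>
    rw [Function.iterate_succ_apply', ← Nat.sub_sub]
    exact ih.fderiv_apply w

end VanishesToOrder

theorem vanishesToOrder_prod {ι : Type*} {a : E} (s : Finset ι) {f : ι → E → 𝔸}
    (hf : ∀ j ∈ s, ContDiff 𝕜 ∞ (f j)) (hfa : ∀ j ∈ s, f j a = 0) :
    VanishesToOrder 𝕜 a #s (∏ j ∈ s, f j) := by
  induction s using Finset.induction with
  | empty =>
    rw [prod_empty]
    exact .of_contDiff contDiff_const
  | insert j s hj ih =>
    rw [prod_insert hj, card_insert_of_notMem hj]
    exact .mul (hf j (mem_insert_self j s)) (hfa j (mem_insert_self j s))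
      (ih (fun i hi => hf i (mem_insert_of_mem hi)) fun i hi => hfa i (mem_insert_of_mem hi))

end Smooth

theorem VanishesToOrder.dmulti {a : Fin d → ℝ} {m : ℕ} {f : (Fin d → ℝ) → ℂ}
    (h : VanishesToOrder ℝ a m f) (β : Fin d → ℕ) :
    VanishesToOrder ℝ a (m - ∑ i, β i) (Dmulti β f) := by
  rw [Dmulti, Fin.sum_univ_def]
  induction List.finRange d with
  | nil => exact h
  | cons i L ih =>
    rw [List.foldr_cons, List.map_cons, List.sum_cons, add_comm, ← Nat.sub_sub]
    exact ih.iterate_fderiv_apply (Pi.single i 1) (β i)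

theorem VanishesToOrder.dmulti_apply_eq_zero {a : Fin d → ℝ} {m : ℕ} {f : (Fin d → ℝ) → ℂ}
    (h : VanishesToOrder ℝ a m f) {β : Fin d → ℕ} (hβ : ∑ i, β i < m) : Dmulti β f a = 0 :=
  (h.dmulti β).apply_eq_zero (by omega)

theorem vanishesToOrder_hatB (V : Finset ι) (v : ι → Fin d → ℤ) (α : Fin d → ℤ) :
    VanishesToOrder ℝ (castV α) (V.filter fun j => dotII α (v j) ≠ 0).card (hatB V v) := by
  set U := V.filter fun j => dotII α (v j) ≠ 0
  have hsplit : hatB V v = (∏ j ∈ V \ U, fun x => gfun (dotIR (v j) x)) *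
      ∏ j ∈ U, fun x => gfun (dotIR (v j) x) := by
    rw [prod_sdiff (filter_subset _ V)]
    ext x
    simp [hatB]
  rw [hsplit]
  refine .contDiff_mul (contDiff_prod' fun j _ => contDiff_gfun_dotIR (v j)) ?_
  refine vanishesToOrder_prod U (fun j _ => contDiff_gfun_dotIR (v j)) fun j hj => ?_
  rw [dotIR_castV]
  exact gfun_intCast_eq_zero (mem_filter.mp hj).2

theorem statement5_general {d : ℕ} {ι : Type*} (V : Finset ι) (v : ι → Fin d → ℤ)
    (α : Fin d → ℤ)
    (β : Fin d → ℕ) (hβ : ∑ i, β i = rhoV V v + 1)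
    (hD : Dmulti β (hatB V v) (castV α) ≠ 0)
    (hcard : rhoV V v + 1 ≤ (V.filter fun j => dotII α (v j) ≠ 0).card) :
    (V.filter fun j => dotII α (v j) ≠ 0).card = rhoV V v + 1 := by
  by_contra hne
  exact hD ((vanishesToOrder_hatB V v α).dmulti_apply_eq_zero (by omega))

/-- Lemma 2.2: if `D^β B̂_V(α) ≠ 0` with `|β| = ϱ_V+1` and `#U_α ≥ ϱ_V+1`,
then `#U_α = ϱ_V+1`. -/
theorem statement5 {d : ℕ} {ι : Type*} (V : Finset ι) (v : ι → Fin d → ℤ)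
    (hadm : Admissible V v) (huni : Unimodular V v)
    (α : Fin d → ℤ) (hα : α ≠ 0)
    (β : Fin d → ℕ) (hβ : ∑ i, β i = rhoV V v + 1)
    (hD : Dmulti β (hatB V v) (castV α) ≠ 0)
    (hcard : rhoV V v + 1 ≤ (V.filter fun j => dotII α (v j) ≠ 0).card) :
    (V.filter fun j => dotII α (v j) ≠ 0).card = rhoV V v + 1 :=
  statement5_general V v α β hβ hD hcard

end
end

section
/- Let V be unimodular admissible, α ∈ ℤ^d \ {0} with #U_α = ϱ_V + 1 where U_α = {v ∈ V : α·v ≠ 0}, and β a multi-index with |β| = ϱ_V + 1. Then D^β B̂_V(α) = (∏_{v ∈ U_α} 1/(α·v)) · D^β(∏_{v ∈ U_α} (x·v))|_{x = α}, where the last derivative is of the homogeneous polynomial x ↦ ∏_{v∈U_α}(x·v). -/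
open MeasureTheory Complex Finset
open scoped Real Classical

noncomputable section

variable {d : ℕ} {ι : Type*}

/-!
The function `g` extends to an entire function vanishing at every nonzero integer `n` with
derivative `1/n` there, so `g(t) = (t - n) h_n(t)` with `h_n` smooth and `h_n(n) = 1/n`.
Hence `B̂_V(x) = ∏_{v ∈ U_α} (x·v - α·v) · R(x)` with `R` smooth and
`R(α) = ∏_{v ∈ U_α} 1/(α·v)`, the remaining factors being `g(0) = 1`. When `#U_α`
derivatives hit a product of `#U_α` affine functions vanishing at `α` times `R`, every term in
which `R` is differentiated, or some affine factor is left undifferentiated, vanishes at `α`;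
what is left is `R(α)` times the same derivative of the product of the linear parts.
-/

open scoped ContDiff

section IteratedDirDeriv

variable {E 𝔸 : Type*} [NormedAddCommGroup E] [NormedSpace ℝ E]
  [NormedCommRing 𝔸] [NormedAlgebra ℝ 𝔸]

def iteratedDirDeriv (L : List E) (f : E → 𝔸) : E → 𝔸 :=
  L.foldr (fun u F x => fderiv ℝ F x u) f

theorem iteratedDirDeriv_cons (u : E) (L : List E) (f : E → 𝔸) :
    iteratedDirDeriv (u :: L) f = fun x => fderiv ℝ (iteratedDirDeriv L f) x u := rfl

theorem iteratedDirDeriv_append (L₁ L₂ : List E) (f : E → 𝔸) :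
    iteratedDirDeriv (L₁ ++ L₂) f = iteratedDirDeriv L₁ (iteratedDirDeriv L₂ f) :=
  List.foldr_append

theorem iteratedDirDeriv_concat (L : List E) (u : E) (f : E → 𝔸) :
    iteratedDirDeriv (L ++ [u]) f = iteratedDirDeriv L (fun x => fderiv ℝ f x u) :=
  iteratedDirDeriv_append L [u] f

theorem ContDiff.fderiv_apply_const {f : E → 𝔸} (hf : ContDiff ℝ ∞ f) (u : E) :
    ContDiff ℝ ∞ (fun x => fderiv ℝ f x u) :=
  (hf.fderiv_right (by simp)).clm_apply contDiff_const

theorem ContDiff.iteratedDirDeriv {f : E → 𝔸} (hf : ContDiff ℝ ∞ f) (L : List E) :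
    ContDiff ℝ ∞ (iteratedDirDeriv L f) := by
  induction L with
  | nil => exact hf
  | cons u L ih => exact ih.fderiv_apply_const u

theorem iteratedDirDeriv_add (L : List E) {f g : E → 𝔸} (hf : ContDiff ℝ ∞ f)
    (hg : ContDiff ℝ ∞ g) :
    iteratedDirDeriv L (fun x => f x + g x) =
      fun x => iteratedDirDeriv L f x + iteratedDirDeriv L g x := by
  induction L with
  | nil => rfl
  | cons u L ih =>
    ext x
    rw [iteratedDirDeriv_cons, ih]
    beta_reduce
    rw [fderiv_fun_add ((hf.iteratedDirDeriv L).differentiable (by simp) x)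
      ((hg.iteratedDirDeriv L).differentiable (by simp) x)]
    rfl

theorem iteratedDirDeriv_const_mul (L : List E) {f : E → 𝔸} (hf : ContDiff ℝ ∞ f)
    (c : 𝔸) :
    iteratedDirDeriv L (fun x => c * f x) = fun x => c * iteratedDirDeriv L f x := by
  induction L with
  | nil => rfl
  | cons u L ih =>
    ext x
    rw [iteratedDirDeriv_cons, ih]
    beta_reduce
    rw [fderiv_const_mul ((hf.iteratedDirDeriv L).differentiable (by simp) x)]
    rfl

theorem iteratedDirDeriv_sum (L : List E) (s : Finset ι) {F : ι → E → 𝔸}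
    (hF : ∀ j ∈ s, ContDiff ℝ ∞ (F j)) :
    iteratedDirDeriv L (fun x => ∑ j ∈ s, F j x) =
      fun x => ∑ j ∈ s, iteratedDirDeriv L (F j) x := by
  induction L with
  | nil => rfl
  | cons u L ih =>
    ext x
    rw [iteratedDirDeriv_cons, ih]
    beta_reduce
    rw [fderiv_fun_sum fun j hj => ((hF j hj).iteratedDirDeriv L).differentiable (by simp) x]
    simp only [_root_.sum_apply, iteratedDirDeriv_cons]

def affineProd (U : Finset ι) (φ : ι → E →L[ℝ] 𝔸) (b : ι → 𝔸) (x : E) : 𝔸 :=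
  ∏ j ∈ U, (φ j x + b j)

variable (U : Finset ι) (φ : ι → E →L[ℝ] 𝔸) (b : ι → 𝔸)

theorem contDiff_affineProd : ContDiff ℝ ∞ (affineProd U φ b) :=
  contDiff_prod fun j _ => (φ j).contDiff.add contDiff_const

theorem fderiv_affineProd_apply (x u : E) :
    fderiv ℝ (affineProd U φ b) x u = ∑ j ∈ U, φ j u * affineProd (U.erase j) φ b x := by
  have hφ : ∀ j ∈ U, HasFDerivAt (fun x => φ j x + b j) (φ j) x :=
    fun j _ => (φ j).hasFDerivAt.add_const (b j)
  unfold affineProd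
  rw [(HasFDerivAt.finsetProd hφ).fderiv]
  simp only [_root_.sum_apply, smul_apply, smul_eq_mul, mul_comm]

theorem fderiv_affineProd_mul_apply {R : E → 𝔸} (hR : Differentiable ℝ R) (u : E) :
    (fun x => fderiv ℝ (fun x => affineProd U φ b x * R x) x u) = fun x =>
      ∑ j ∈ U, φ j u * (affineProd (U.erase j) φ b x * R x) +
        affineProd U φ b x * fderiv ℝ R x u := by
  ext x
  rw [fderiv_fun_mul ((contDiff_affineProd U φ b).differentiable (by simp) x) (hR x)]
  simp only [add_apply, smul_apply, smul_eq_mul, fderiv_affineProd_apply, Finset.mul_sum]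
  rw [add_comm]
  congr 1
  exact Finset.sum_congr rfl fun j _ => by ring

variable {U φ b} {R : E → 𝔸}

theorem iteratedDirDeriv_affineProd_mul_eq_zero {a : E} (ha : ∀ j ∈ U, φ j a + b j = 0)
    (hR : ContDiff ℝ ∞ R) (L : List E) (hL : L.length < U.card) :
    iteratedDirDeriv L (fun x => affineProd U φ b x * R x) a = 0 := by
  induction L using List.reverseRecOn generalizing U R with
  | nil =>
    obtain ⟨j, hj⟩ := Finset.card_pos.mp hL
    exact mul_eq_zero_of_left (Finset.prod_eq_zero hj (ha j hj)) _
  | append_singleton L u ih =>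
    have hL' : L.length + 1 < U.card := by simpa using hL
    have hterm : ∀ j ∈ U,
        ContDiff ℝ ∞ (fun x => φ j u * (affineProd (U.erase j) φ b x * R x)) :=
      fun j _ => contDiff_const.mul ((contDiff_affineProd _ φ b).mul hR)
    rw [iteratedDirDeriv_concat, fderiv_affineProd_mul_apply U φ b (hR.differentiable (by simp)),
      iteratedDirDeriv_add L (ContDiff.sum hterm)
        ((contDiff_affineProd U φ b).mul (hR.fderiv_apply_const u)),
      iteratedDirDeriv_sum L U hterm]
    simp only [iteratedDirDeriv_const_mul L ((contDiff_affineProd _ φ b).mul hR)]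
    rw [ih ha (hR.fderiv_apply_const u) (by omega), add_zero]
    refine Finset.sum_eq_zero fun j hj => ?_
    rw [ih (fun i hi => ha i (Finset.mem_of_mem_erase hi)) hR
      (by rw [Finset.card_erase_of_mem hj]; omega), mul_zero]

theorem iteratedDirDeriv_affineProd_mul {a : E} (ha : ∀ j ∈ U, φ j a + b j = 0)
    (hR : ContDiff ℝ ∞ R) (L : List E) (hL : L.length = U.card) (y : E) :
    iteratedDirDeriv L (fun x => affineProd U φ b x * R x) a =
      iteratedDirDeriv L (affineProd U φ 0) y * R a := by
  induction L using List.reverseRecOn generalizing U with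
  | nil =>
    rw [Finset.card_eq_zero.mp hL.symm]
    simp [iteratedDirDeriv, affineProd]
  | append_singleton L u ih =>
    have hL' : L.length + 1 = U.card := by simpa using hL
    have hterm : ∀ j ∈ U,
        ContDiff ℝ ∞ (fun x => φ j u * (affineProd (U.erase j) φ b x * R x)) :=
      fun j _ => contDiff_const.mul ((contDiff_affineProd _ φ b).mul hR)
    have hterm₀ : ∀ j ∈ U,
        ContDiff ℝ ∞ (fun x => φ j u * affineProd (U.erase j) φ 0 x) :=
      fun j _ => contDiff_const.mul (contDiff_affineProd _ φ 0)
    rw [iteratedDirDeriv_concat, fderiv_affineProd_mul_apply U φ b (hR.differentiable (by simp)),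
      iteratedDirDeriv_add L (ContDiff.sum hterm)
        ((contDiff_affineProd U φ b).mul (hR.fderiv_apply_const u)),
      iteratedDirDeriv_sum L U hterm, iteratedDirDeriv_concat,
      funext fun x => fderiv_affineProd_apply U φ 0 x u, iteratedDirDeriv_sum L U hterm₀]
    simp only [iteratedDirDeriv_const_mul L ((contDiff_affineProd _ φ b).mul hR),
      iteratedDirDeriv_const_mul L (contDiff_affineProd _ φ 0)]
    rw [iteratedDirDeriv_affineProd_mul_eq_zero ha (hR.fderiv_apply_const u) L (by omega),
      add_zero, Finset.sum_mul]
    refine Finset.sum_congr rfl fun j hj => ?_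
    rw [ih (fun i hi => ha i (Finset.mem_of_mem_erase hi))
      (by rw [Finset.card_erase_of_mem hj]; omega), mul_assoc]

end IteratedDirDeriv

section EntireExtension

open Topology

def gNumerator (w : ℂ) : ℂ := (1 - cexp (-(2 * π * I * w))) / (2 * π * I)

def gEntire : ℂ → ℂ := dslope gNumerator 0

theorem hasDerivAt_gNumerator (w : ℂ) :
    HasDerivAt gNumerator (cexp (-(2 * π * I * w))) w := by
  have h : HasDerivAt (fun w => -(2 * π * I * w)) (-(2 * π * I)) w := by
    simpa using ((hasDerivAt_id w).const_mul (2 * π * I)).fun_neg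
  refine (((hasDerivAt_const w (1 : ℂ)).sub h.cexp).div_const (2 * π * I)).congr_deriv ?_
  field_simp
  ring

theorem cexp_neg_two_pi_I_mul_intCast (n : ℤ) : cexp (-(2 * π * I * n)) = 1 := by
  rw [← exp_int_mul_two_pi_mul_I (-n)]
  push_cast
  ring_nf

theorem gNumerator_intCast (n : ℤ) : gNumerator n = 0 := by
  rw [gNumerator, cexp_neg_two_pi_I_mul_intCast, sub_self, zero_div]

theorem gEntire_of_ne_zero {z : ℂ} (hz : z ≠ 0) : gEntire z = gNumerator z / z := by
  rw [gEntire, dslope_of_ne _ hz, slope_def_field, ← Int.cast_zero, gNumerator_intCast]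
  simp

theorem gEntire_zero : gEntire 0 = 1 := by
  rw [gEntire, dslope_same, (hasDerivAt_gNumerator 0).deriv]
  simp

theorem gfun_eq_gEntire (t : ℝ) : gfun t = gEntire t := by
  rcases eq_or_ne t 0 with rfl | ht
  · simp [gfun, gEntire_zero]
  · rw [gfun, if_neg ht, gEntire_of_ne_zero (ofReal_ne_zero.mpr ht), gNumerator]
    field_simp

theorem gEntire_intCast {n : ℤ} (hn : n ≠ 0) : gEntire n = 0 := by
  rw [gEntire_of_ne_zero (Int.cast_ne_zero.mpr hn), gNumerator_intCast, zero_div]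

theorem deriv_gEntire_intCast {n : ℤ} (hn : n ≠ 0) : deriv gEntire n = (n : ℂ)⁻¹ := by
  have hn' : (n : ℂ) ≠ 0 := Int.cast_ne_zero.mpr hn
  have hloc : gEntire =ᶠ[𝓝 (n : ℂ)] fun z => gNumerator z / z := by
    filter_upwards [eventually_ne_nhds hn'] with z hz using gEntire_of_ne_zero hz
  rw [hloc.deriv_eq, ((hasDerivAt_gNumerator n).fun_div (hasDerivAt_id' _) hn').deriv,
    gNumerator_intCast, cexp_neg_two_pi_I_mul_intCast]
  field_simp
  ring

theorem differentiable_gEntire : Differentiable ℂ gEntire := by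
  rw [← differentiableOn_univ, gEntire, Complex.differentiableOn_dslope Filter.univ_mem]
  exact fun w _ => (hasDerivAt_gNumerator w).differentiableAt.differentiableWithinAt

theorem gEntire_eq_sub_mul_dslope {n : ℤ} (hn : n ≠ 0) (z : ℂ) :
    gEntire z = (z - n) * dslope gEntire n z := by
  rw [← smul_eq_mul, sub_smul_dslope, gEntire_intCast hn, sub_zero]

theorem dslope_gEntire_intCast_self {n : ℤ} (hn : n ≠ 0) :
    dslope gEntire n n = (n : ℂ)⁻¹ := by
  rw [dslope_same, deriv_gEntire_intCast hn]

theorem contDiff_dslope_gEntire (c : ℂ) : ContDiff ℝ ∞ (dslope gEntire c) := by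
  have : Differentiable ℂ (dslope gEntire c) := by
    rw [← differentiableOn_univ, Complex.differentiableOn_dslope Filter.univ_mem]
    exact differentiable_gEntire.differentiableOn
  exact this.contDiff.restrict_scalars ℝ

theorem contDiff_gEntire : ContDiff ℝ ∞ gEntire :=
  differentiable_gEntire.contDiff.restrict_scalars ℝ

end EntireExtension

section BoxSpline

def dotCLM (u : Fin d → ℤ) : (Fin d → ℝ) →L[ℝ] ℂ :=
  ofRealCLM.comp (∑ i, (u i : ℝ) • ContinuousLinearMap.proj i)

theorem dotCLM_apply (u : Fin d → ℤ) (x : Fin d → ℝ) : dotCLM u x = dotIR u x := by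
  simp [dotCLM, dotIR]

theorem dotCLM_castV (u α : Fin d → ℤ) : dotCLM u (castV α) = dotII α u := by
  simp [dotCLM_apply, dotIR, dotII, castV, mul_comm]

def coordDirections (β : Fin d → ℕ) : List (Fin d → ℝ) :=
  (List.finRange d).flatMap fun i => List.replicate (β i) (Pi.single i 1)

theorem length_coordDirections (β : Fin d → ℕ) :
    (coordDirections β).length = ∑ i, β i := by
  simp [coordDirections, List.length_flatMap, Fin.sum_univ_def]

theorem Dmulti_eq_iteratedDirDeriv (β : Fin d → ℕ) (f : (Fin d → ℝ) → ℂ) :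
    Dmulti β f = iteratedDirDeriv (coordDirections β) f := by
  have hrep (n : ℕ) (i : Fin d) (g : (Fin d → ℝ) → ℂ) :
      iteratedDirDeriv (List.replicate n (Pi.single i 1)) g = (pderivC i)^[n] g := by
    induction n with
    | zero => rfl
    | succ n ih =>
      rw [List.replicate_succ, iteratedDirDeriv_cons, ih, Function.iterate_succ_apply']
      rfl
  unfold Dmulti coordDirections
  induction List.finRange d with
  | nil => rfl
  | cons i l ih => rw [List.foldr_cons, List.flatMap_cons, iteratedDirDeriv_append, ← ih, hrep]

variable (V : Finset ι) (v : ι → Fin d → ℤ) (α : Fin d → ℤ)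

def hatBCofactor (x : Fin d → ℝ) : ℂ :=
  (∏ j ∈ V.filter fun j => dotII α (v j) ≠ 0,
      dslope gEntire (dotII α (v j)) (dotCLM (v j) x)) *
    ∏ j ∈ V.filter fun j => dotII α (v j) = 0, gEntire (dotCLM (v j) x)

theorem hatB_eq_affineProd_mul_hatBCofactor :
    hatB V v = fun x => affineProd (V.filter fun j => dotII α (v j) ≠ 0) (fun j => dotCLM (v j))
      (fun j => -(dotII α (v j) : ℂ)) x * hatBCofactor V v α x := by
  ext x
  have hvanishing : ∀ j ∈ V.filter fun j => dotII α (v j) ≠ 0, gfun (dotIR (v j) x) =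
        (dotCLM (v j) x + -(dotII α (v j) : ℂ)) *
          dslope gEntire (dotII α (v j)) (dotCLM (v j) x) :=
    fun j hj => by
      rw [gfun_eq_gEntire, ← dotCLM_apply, ← sub_eq_add_neg,
        gEntire_eq_sub_mul_dslope (Finset.mem_filter.mp hj).2]
  rw [hatB, ← Finset.prod_filter_mul_prod_filter_not V fun j => dotII α (v j) ≠ 0,
    Finset.prod_congr rfl hvanishing, Finset.prod_mul_distrib, hatBCofactor, affineProd,
    mul_assoc]
  simp only [ne_eq, not_not, gfun_eq_gEntire, dotCLM_apply]

theorem contDiff_hatBCofactor : ContDiff ℝ ∞ (hatBCofactor V v α) :=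
  (contDiff_prod fun j _ => (contDiff_dslope_gEntire _).comp (dotCLM (v j)).contDiff).mul
    (contDiff_prod fun j _ => contDiff_gEntire.comp (dotCLM (v j)).contDiff)

theorem hatBCofactor_castV : hatBCofactor V v α (castV α) =
    ∏ j ∈ V.filter fun j => dotII α (v j) ≠ 0, (1 : ℂ) / (dotII α (v j) : ℤ) := by
  have hnonzero : ∀ j ∈ V.filter fun j => dotII α (v j) ≠ 0,
      dslope gEntire (dotII α (v j)) (dotCLM (v j) (castV α)) = 1 / (dotII α (v j) : ℤ) :=
    fun j hj => by
      rw [dotCLM_castV, dslope_gEntire_intCast_self (Finset.mem_filter.mp hj).2, one_div]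
  have hzero : ∀ j ∈ V.filter fun j => dotII α (v j) = 0,
      gEntire (dotCLM (v j) (castV α)) = 1 :=
    fun j hj => by rw [dotCLM_castV, (Finset.mem_filter.mp hj).2, Int.cast_zero, gEntire_zero]
  rw [hatBCofactor, Finset.prod_congr rfl hnonzero, Finset.prod_eq_one hzero, mul_one]

theorem polyU_eq_affineProd (U : Finset ι) :
    polyU U (fun j => castV (v j)) = affineProd U (fun j => dotCLM (v j)) 0 := by
  ext x
  simp [polyU, affineProd, dotCLM_apply, dotIR, castV, mul_comm]

end BoxSpline

theorem statement7_general {d : ℕ} {ι : Type*} (V : Finset ι) (v : ι → Fin d → ℤ)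
    (α : Fin d → ℤ)
    (β : Fin d → ℕ) (hβ : ∑ i, β i = rhoV V v + 1)
    (hcard : (V.filter fun j => dotII α (v j) ≠ 0).card = rhoV V v + 1) :
    Dmulti β (hatB V v) (castV α) =
      (∏ j ∈ V.filter fun j => dotII α (v j) ≠ 0, (1 : ℂ) / (dotII α (v j) : ℤ)) *
        Dmulti β (polyU (V.filter fun j => dotII α (v j) ≠ 0) fun j => castV (v j))
          (castV α) := by
  have hvanish : ∀ j ∈ V.filter fun j => dotII α (v j) ≠ 0,
      dotCLM (v j) (castV α) + -(dotII α (v j) : ℂ) = 0 := fun j _ => by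
    rw [dotCLM_castV, add_neg_cancel]
  have hlen : (coordDirections β).length = (V.filter fun j => dotII α (v j) ≠ 0).card := by
    rw [length_coordDirections, hβ, hcard]
  rw [Dmulti_eq_iteratedDirDeriv, Dmulti_eq_iteratedDirDeriv,
    hatB_eq_affineProd_mul_hatBCofactor V v α,
    iteratedDirDeriv_affineProd_mul hvanish (contDiff_hatBCofactor V v α) _ hlen (castV α),
    hatBCofactor_castV, polyU_eq_affineProd, mul_comm]

/-- formula (12): `D^β B̂_V(α) = ∏_{v∈U_α} (α⋅v)⁻¹ ⋅ D^β(∏_{v∈U_α}(x⋅v))|_{x=α}`. -/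
theorem statement7 {d : ℕ} {ι : Type*} (V : Finset ι) (v : ι → Fin d → ℤ)
    (hadm : Admissible V v) (huni : Unimodular V v)
    (α : Fin d → ℤ) (hα : α ≠ 0)
    (β : Fin d → ℕ) (hβ : ∑ i, β i = rhoV V v + 1)
    (hcard : (V.filter fun j => dotII α (v j) ≠ 0).card = rhoV V v + 1) :
    Dmulti β (hatB V v) (castV α) =
      (∏ j ∈ V.filter fun j => dotII α (v j) ≠ 0, (1 : ℂ) / (dotII α (v j) : ℤ)) *
        Dmulti β (polyU (V.filter fun j => dotII α (v j) ≠ 0) fun j => castV (v j))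
          (castV α) :=
  statement7_general V v α β hβ hcard

end
end

section
/- Let U be a finite multiset of vectors in ℝ^d with #U = k. For any smooth function f and any point t, the sum over multi-indices β with |β| = k of (1/β!) D^β(∏_{v∈U}(x·v))·D^β f(t) equals the iterated directional derivative D_U f(t) = (∏_{v∈U} D_v) f(t), where D^β(∏_{v∈U}(x·v)) denotes the (constant) β-th derivative of the degree-k homogeneous polynomial p(x) = ∏_{v∈U}(x·v). -/
open MeasureTheory Complex Finset
open scoped Real Classical

noncomputable section

variable {d : ℕ} {ι : Type*}

section S8

variable {f g q : (Fin d → ℝ) → ℂ}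

lemma s8_contDiff_dirDeriv (hf : ContDiff ℝ (⊤ : ℕ∞) f) (w : Fin d → ℝ) :
    ContDiff ℝ (⊤ : ℕ∞) (dirDeriv w f) :=
  (ContinuousLinearMap.apply ℝ ℂ w).contDiff.comp (hf.fderiv_right (by simp))

lemma s8_pderivC_eq (i : Fin d) : pderivC i f = dirDeriv (Pi.single i 1) f := rfl

lemma s8_contDiff_pderivC (hf : ContDiff ℝ (⊤ : ℕ∞) f) (i : Fin d) :
    ContDiff ℝ (⊤ : ℕ∞) (pderivC i f) := s8_contDiff_dirDeriv hf _

lemma s8_contDiff_pderivC_iterate (hf : ContDiff ℝ (⊤ : ℕ∞) f) (i : Fin d) (n : ℕ) :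
    ContDiff ℝ (⊤ : ℕ∞) ((pderivC i)^[n] f) := by
  induction n generalizing f with
  | zero => exact hf
  | succ n ih =>
    rw [Function.iterate_succ_apply]
    exact ih (s8_contDiff_pderivC hf i)

lemma s8_dirDeriv_swap (hf : ContDiff ℝ (⊤ : ℕ∞) f) (u w : Fin d → ℝ) :
    dirDeriv u (dirDeriv w f) = dirDeriv w (dirDeriv u f) := by
  funext x
  have hsymm : IsSymmSndFDerivAt ℝ f x := (hf.contDiffAt).isSymmSndFDerivAt (by rw [minSmoothness_of_isRCLikeNormedField]; exact WithTop.coe_le_coe.mpr le_top)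
  have hd : ContDiff ℝ (⊤ : ℕ∞) (fderiv ℝ f) := hf.fderiv_right (by simp)
  have key : ∀ a b : Fin d → ℝ, dirDeriv a (dirDeriv b f) x = fderiv ℝ (fderiv ℝ f) x a b := by
    intro a b
    have h2 : dirDeriv b f = (ContinuousLinearMap.apply ℝ ℂ b) ∘ (fderiv ℝ f) := rfl
    rw [dirDeriv, h2, fderiv_comp x ((ContinuousLinearMap.apply ℝ ℂ b).differentiableAt)
      (hd.differentiable (by simp) x)]
    simp
  rw [key, key, hsymm.eq]

lemma s8_dirDeriv_apply (hf : ContDiff ℝ (⊤ : ℕ∞) f) (w : Fin d → ℝ) (t : Fin d → ℝ) :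
    dirDeriv w f t = ∑ i, (w i : ℂ) * pderivC i f t := by
  have hw : w = ∑ i, (w i) • (Pi.single i 1 : Fin d → ℝ) := by
    funext j
    simp [Finset.sum_apply, Pi.single_apply]
  rw [dirDeriv]
  conv_lhs => rw [hw]
  rw [map_sum]
  refine Finset.sum_congr rfl fun i _ => ?_
  rw [ContinuousLinearMap.map_smul, pderivC]
  simp [Complex.real_smul]

-- foldrD

def s8_foldrD (β : Fin d → ℕ) (l : List (Fin d)) (f : (Fin d → ℝ) → ℂ) : (Fin d → ℝ) → ℂ :=
  l.foldr (fun i F => (pderivC i)^[β i] F) f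

lemma s8_Dmulti_eq (β : Fin d → ℕ) : Dmulti β f = s8_foldrD β (List.finRange d) f := rfl

@[simp] lemma s8_foldrD_nil (β : Fin d → ℕ) : s8_foldrD β [] f = f := rfl

@[simp] lemma s8_foldrD_cons (β : Fin d → ℕ) (j : Fin d) (l : List (Fin d)) :
    s8_foldrD β (j :: l) f = (pderivC j)^[β j] (s8_foldrD β l f) := rfl

lemma s8_contDiff_foldrD (hf : ContDiff ℝ (⊤ : ℕ∞) f) (β : Fin d → ℕ) (l : List (Fin d)) :
    ContDiff ℝ (⊤ : ℕ∞) (s8_foldrD β l f) := by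
  induction l with
  | nil => exact hf
  | cons j l ih => exact s8_contDiff_pderivC_iterate ih j (β j)

lemma s8_foldrD_congr {β γ : Fin d → ℕ} (l : List (Fin d)) (h : ∀ i ∈ l, β i = γ i) :
    s8_foldrD β l f = s8_foldrD γ l f := by
  induction l with
  | nil => rfl
  | cons j l ih =>
    rw [s8_foldrD_cons, s8_foldrD_cons, ih (fun i hi => h i (List.mem_cons_of_mem _ hi)),
      h j List.mem_cons_self]

lemma s8_pderivC_iterate_comm (hf : ContDiff ℝ (⊤ : ℕ∞) f) (i j : Fin d) (n : ℕ) :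
    pderivC i ((pderivC j)^[n] f) = (pderivC j)^[n] (pderivC i f) := by
  induction n generalizing f with
  | zero => rfl
  | succ n ih =>
    rw [Function.iterate_succ_apply, Function.iterate_succ_apply,
      ih (s8_contDiff_pderivC hf j)]
    congr 1
    exact s8_dirDeriv_swap hf (Pi.single i 1) (Pi.single j 1)

lemma s8_pderivC_foldrD (hf : ContDiff ℝ (⊤ : ℕ∞) f) (β : Fin d → ℕ) (l : List (Fin d)) (i : Fin d) :
    pderivC i (s8_foldrD β l f) = s8_foldrD β l (pderivC i f) := by
  induction l with
  | nil => rfl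
  | cons j l ih =>
    rw [s8_foldrD_cons, s8_pderivC_iterate_comm (s8_contDiff_foldrD hf β l) i j, ih,
      s8_foldrD_cons]

lemma s8_foldrD_single_add (hf : ContDiff ℝ (⊤ : ℕ∞) f) (β : Fin d → ℕ) (i : Fin d)
    (l : List (Fin d)) (hl : l.Nodup) (hi : i ∈ l) :
    s8_foldrD (β + Pi.single i 1) l f = s8_foldrD β l (pderivC i f) := by
  induction l with
  | nil => simp at hi
  | cons j l ih =>
    rcases List.nodup_cons.mp hl with ⟨hjl, hl'⟩
    by_cases hji : j = i
    · subst hji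
      have hjnotin : j ∉ l := hjl
      have h1 : s8_foldrD (β + Pi.single j 1) l f = s8_foldrD β l f :=
        s8_foldrD_congr l (fun i' hi' => by
          have : i' ≠ j := fun h => hjnotin (h ▸ hi')
          simp [Pi.single_eq_of_ne this])
      have h2 : (β + Pi.single j 1 : Fin d → ℕ) j = β j + 1 := by simp
      rw [s8_foldrD_cons, h1, h2, Function.iterate_succ, Function.comp_apply,
        s8_pderivC_foldrD hf β l j, s8_foldrD_cons]
    · have hi' : i ∈ l := by
        rcases List.mem_cons.mp hi with h | h
        · exact absurd h.symm hji
        · exact h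
      rw [s8_foldrD_cons, s8_foldrD_cons, ih hl' hi']
      congr 1
      simp [Pi.single_eq_of_ne hji]

lemma s8_Dmulti_single_add (hf : ContDiff ℝ (⊤ : ℕ∞) f) (β : Fin d → ℕ) (i : Fin d) :
    Dmulti (β + Pi.single i 1) f = Dmulti β (pderivC i f) :=
  s8_foldrD_single_add hf β i _ (List.nodup_finRange d) (List.mem_finRange i)

lemma s8_Dmulti_zero : Dmulti (0 : Fin d → ℕ) f = f := by
  rw [s8_Dmulti_eq]
  induction List.finRange d with
  | nil => rfl
  | cons j l ih => rw [s8_foldrD_cons, ih]; simp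

end S8

section S8b

variable {f g q F G : (Fin d → ℝ) → ℂ} {v : ι → Fin d → ℝ}

def s8_linC (w : Fin d → ℝ) (x : Fin d → ℝ) : ℂ := ((∑ i, x i * w i : ℝ) : ℂ)

def s8_LW (w : Fin d → ℝ) : (Fin d → ℝ) →L[ℝ] ℂ :=
  ∑ j, (w j : ℂ) • (Complex.ofRealCLM.comp (ContinuousLinearMap.proj j))

lemma s8_linC_eq (w : Fin d → ℝ) : s8_linC w = ⇑(s8_LW w) := by
  funext x
  simp only [s8_linC, s8_LW, ContinuousLinearMap.coe_sum', Finset.sum_apply,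
    ContinuousLinearMap.smul_apply, ContinuousLinearMap.coe_comp', Function.comp_apply,
    ContinuousLinearMap.proj_apply, Complex.ofRealCLM_apply, smul_eq_mul,
    Complex.ofReal_sum, Complex.ofReal_mul]
  exact Finset.sum_congr rfl fun j _ => mul_comm _ _

lemma s8_contDiff_linC (w : Fin d → ℝ) : ContDiff ℝ (⊤ : ℕ∞) (s8_linC w) := by
  rw [s8_linC_eq]; exact (s8_LW w).contDiff

lemma s8_pderivC_linC (w : Fin d → ℝ) (i : Fin d) :
    pderivC i (s8_linC w) = fun _ => (w i : ℂ) := by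
  funext x
  rw [pderivC, s8_linC_eq, ContinuousLinearMap.fderiv]
  simp [s8_LW, Pi.single_apply, apply_ite, mul_ite]

lemma s8_linC_zero (w : Fin d → ℝ) : s8_linC w 0 = 0 := by simp [s8_linC]

lemma s8_pderivC_add (hF : ContDiff ℝ (⊤ : ℕ∞) F) (hG : ContDiff ℝ (⊤ : ℕ∞) G) (i : Fin d) :
    pderivC i (fun x => F x + G x) = fun x => pderivC i F x + pderivC i G x := by
  funext x
  rw [pderivC, fderiv_fun_add (hF.differentiable (by simp) x)
    (hG.differentiable (by simp) x)]
  simp [pderivC]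

lemma s8_pderivC_const_mul (c : ℂ) (hG : ContDiff ℝ (⊤ : ℕ∞) G) (i : Fin d) :
    pderivC i (fun x => c * G x) = fun x => c * pderivC i G x := by
  funext x
  rw [pderivC, fderiv_const_mul (hG.differentiable (by simp) x) c]
  simp [pderivC]

lemma s8_iterate_add (hF : ContDiff ℝ (⊤ : ℕ∞) F) (hG : ContDiff ℝ (⊤ : ℕ∞) G) (i : Fin d) (n : ℕ) :
    (pderivC i)^[n] (fun x => F x + G x)
      = fun x => (pderivC i)^[n] F x + (pderivC i)^[n] G x := by
  induction n generalizing F G with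
  | zero => rfl
  | succ n ih =>
    rw [Function.iterate_succ_apply, Function.iterate_succ_apply (pderivC i) n F,
      Function.iterate_succ_apply (pderivC i) n G,
      s8_pderivC_add hF hG i, ih (s8_contDiff_pderivC hF i) (s8_contDiff_pderivC hG i)]

lemma s8_iterate_const_mul (c : ℂ) (hG : ContDiff ℝ (⊤ : ℕ∞) G) (i : Fin d) (n : ℕ) :
    (pderivC i)^[n] (fun x => c * G x) = fun x => c * (pderivC i)^[n] G x := by
  induction n generalizing G with
  | zero => rfl
  | succ n ih =>
    rw [Function.iterate_succ_apply, Function.iterate_succ_apply (pderivC i) n G,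
      s8_pderivC_const_mul c hG i, ih (s8_contDiff_pderivC hG i)]

lemma s8_iterate_comb {γ : Type*} (s : Finset γ) (c : γ → ℂ) (Fn : γ → (Fin d → ℝ) → ℂ)
    (hF : ∀ g, ContDiff ℝ (⊤ : ℕ∞) (Fn g)) (i : Fin d) (n : ℕ) :
    (pderivC i)^[n] (fun x => ∑ g ∈ s, c g * Fn g x)
      = fun x => ∑ g ∈ s, c g * (pderivC i)^[n] (Fn g) x := by
  classical
  induction s using Finset.induction_on with
  | empty =>
    simp only [Finset.sum_empty]
    induction n with
    | zero => rfl
    | succ n ihn =>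
      rw [Function.iterate_succ_apply]
      have : pderivC i (fun _ : Fin d → ℝ => (0:ℂ)) = fun _ => (0:ℂ) := by
        funext x; simp [pderivC]
      rw [this, ihn]
  | insert a s' hnot ih =>
    have hsum : ContDiff ℝ (⊤ : ℕ∞) (fun x => ∑ g ∈ s', c g * Fn g x) :=
      ContDiff.sum fun g _ => contDiff_const.mul (hF g)
    have hFa : ContDiff ℝ (⊤ : ℕ∞) (fun x => c a * Fn a x) := contDiff_const.mul (hF a)
    simp only [Finset.sum_insert hnot]
    rw [s8_iterate_add hFa hsum i n, s8_iterate_const_mul (c a) (hF a) i n, ih]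
end S8b

section S8c

variable {f q F G : (Fin d → ℝ) → ℂ} {v : ι → Fin d → ℝ}

lemma s8_pderivC_linC_mul (w : Fin d → ℝ) (hq : ContDiff ℝ (⊤ : ℕ∞) q) (i : Fin d) :
    pderivC i (fun x => s8_linC w x * q x)
      = fun x => s8_linC w x * pderivC i q x + (w i : ℂ) * q x := by
  funext x
  rw [pderivC, fderiv_fun_mul ((s8_contDiff_linC w).differentiable (by simp) x)
    (hq.differentiable (by simp) x)]
  have hl : fderiv ℝ (s8_linC w) x (Pi.single i 1) = (w i : ℂ) :=
    congrFun (s8_pderivC_linC w i) x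
  simp only [ContinuousLinearMap.add_apply, ContinuousLinearMap.smul_apply, smul_eq_mul, hl]
  rw [pderivC]
  ring

lemma s8_iter_leibniz (w : Fin d → ℝ) (hq : ContDiff ℝ (⊤ : ℕ∞) q) (i : Fin d) (n : ℕ) :
    (pderivC i)^[n] (fun x => s8_linC w x * q x)
      = fun x => s8_linC w x * (pderivC i)^[n] q x
          + (n : ℂ) * (w i : ℂ) * (pderivC i)^[n - 1] q x := by
  induction n generalizing q with
  | zero => funext x; simp
  | succ n ih =>
    have hDq : ContDiff ℝ (⊤ : ℕ∞) (pderivC i q) := s8_contDiff_pderivC hq i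
    have hF : ContDiff ℝ (⊤ : ℕ∞) (fun x => s8_linC w x * pderivC i q x) :=
      (s8_contDiff_linC w).mul hDq
    have hG : ContDiff ℝ (⊤ : ℕ∞) (fun x => (w i : ℂ) * q x) := contDiff_const.mul hq
    rw [Function.iterate_succ_apply, s8_pderivC_linC_mul w hq i,
      s8_iterate_add hF hG i n, s8_iterate_const_mul ((w i : ℂ)) hq i n, ih hDq]
    funext x
    rcases n with _ | m
    · simp
    · rw [← Function.iterate_succ_apply (pderivC i) (m + 1) q]
      have h2 : (pderivC i)^[m + 1 - 1] (pderivC i q) = (pderivC i)^[m + 1] q := by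
        rw [Nat.add_sub_cancel, ← Function.iterate_succ_apply]
      rw [h2]
      push_cast
      ring

lemma s8_foldrD_leibniz (w : Fin d → ℝ) (hq : ContDiff ℝ (⊤ : ℕ∞) q) (β : Fin d → ℕ)
    (l : List (Fin d)) (hl : l.Nodup) :
    s8_foldrD β l (fun x => s8_linC w x * q x)
      = fun x => s8_linC w x * s8_foldrD β l q x
          + ∑ i ∈ l.toFinset,
              ((β i : ℂ) * (w i : ℂ)) * s8_foldrD (β - Pi.single i 1) l q x := by
  induction l with
  | nil => funext x; simp
  | cons j l ih =>
    rcases List.nodup_cons.mp hl with ⟨hjl, hl'⟩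
    have hQ : ContDiff ℝ (⊤ : ℕ∞) (s8_foldrD β l q) := s8_contDiff_foldrD hq β l
    have hF : ContDiff ℝ (⊤ : ℕ∞) (fun x => s8_linC w x * s8_foldrD β l q x) :=
      (s8_contDiff_linC w).mul hQ
    have hG : ContDiff ℝ (⊤ : ℕ∞) (fun x => ∑ i ∈ l.toFinset,
        ((β i : ℂ) * (w i : ℂ)) * s8_foldrD (β - Pi.single i 1) l q x) :=
      ContDiff.sum fun i _ => contDiff_const.mul (s8_contDiff_foldrD hq _ l)
    rw [s8_foldrD_cons, ih hl', s8_iterate_add hF hG j (β j),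
      s8_iter_leibniz w hQ j (β j),
      s8_iterate_comb l.toFinset _ _ (fun i => s8_contDiff_foldrD hq _ l) j (β j)]
    have htf : (j :: l).toFinset = insert j l.toFinset := by simp
    have hjtf : j ∉ l.toFinset := by simpa using hjl
    funext x
    rw [htf, Finset.sum_insert hjtf]
    have e1 : (pderivC j)^[β j] (s8_foldrD β l q) = s8_foldrD β (j :: l) q := rfl
    have e2 : (pderivC j)^[β j - 1] (s8_foldrD β l q)
        = s8_foldrD (β - Pi.single j 1) (j :: l) q := by
      rw [s8_foldrD_cons]
      have hc : s8_foldrD (β - Pi.single j 1) l q = s8_foldrD β l q :=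
        s8_foldrD_congr l (fun i' hi' => by
          have hne : i' ≠ j := fun h => hjl (h ▸ hi')
          simp [Pi.single_eq_of_ne hne])
      have hx : (β - Pi.single j 1 : Fin d → ℕ) j = β j - 1 := by simp
      rw [hc, hx]
    have e3 : ∀ i ∈ l.toFinset,
        (pderivC j)^[β j] (s8_foldrD (β - Pi.single i 1) l q)
          = s8_foldrD (β - Pi.single i 1) (j :: l) q := by
      intro i hi
      have hij : j ≠ i := fun h => hjtf (h ▸ hi)
      rw [s8_foldrD_cons]
      have hx : (β - Pi.single i 1 : Fin d → ℕ) j = β j := by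
        simp [Pi.single_eq_of_ne hij]
      rw [hx]
    beta_reduce
    rw [e1, e2]
    have : ∑ i ∈ l.toFinset, ((β i : ℂ) * (w i : ℂ))
          * (pderivC j)^[β j] (s8_foldrD (β - Pi.single i 1) l q) x
        = ∑ i ∈ l.toFinset, ((β i : ℂ) * (w i : ℂ))
          * s8_foldrD (β - Pi.single i 1) (j :: l) q x := by
      refine Finset.sum_congr rfl fun i hi => ?_
      rw [e3 i hi]
    rw [this]
    ring

lemma s8_Dmulti_linC_mul_zero (w : Fin d → ℝ) (hq : ContDiff ℝ (⊤ : ℕ∞) q) (β : Fin d → ℕ) :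
    Dmulti β (fun x => s8_linC w x * q x) 0
      = ∑ i, ((β i : ℂ) * (w i : ℂ)) * Dmulti (β - Pi.single i 1) q 0 := by
  have h := congrFun (s8_foldrD_leibniz w hq β (List.finRange d) (List.nodup_finRange d)) 0
  rw [s8_Dmulti_eq, h, s8_linC_zero, zero_mul, zero_add, List.toFinset_finRange]
  rfl

-- foldrDir

def s8_foldrDir (v : ι → Fin d → ℝ) (l : List ι) (f : (Fin d → ℝ) → ℂ) : (Fin d → ℝ) → ℂ :=
  l.foldr (fun j F => dirDeriv (v j) F) f

lemma s8_DUder_eq (U : Finset ι) (f : (Fin d → ℝ) → ℂ) :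
    DUder U v f = s8_foldrDir v U.toList f := rfl

lemma s8_contDiff_foldrDir (hf : ContDiff ℝ (⊤ : ℕ∞) f) (l : List ι) :
    ContDiff ℝ (⊤ : ℕ∞) (s8_foldrDir v l f) := by
  induction l with
  | nil => exact hf
  | cons j l ih => exact s8_contDiff_dirDeriv ih (v j)

lemma s8_foldrDir_perm {l l' : List ι} (h : l.Perm l') :
    ∀ f : (Fin d → ℝ) → ℂ, ContDiff ℝ (⊤ : ℕ∞) f → s8_foldrDir v l f = s8_foldrDir v l' f := by
  induction h with
  | nil => intro f _; rfl
  | cons x _ ih =>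
    intro f hf
    exact congrArg (dirDeriv (v x)) (ih f hf)
  | swap x y l =>
    intro f hf
    exact s8_dirDeriv_swap (s8_contDiff_foldrDir hf l) (v y) (v x)
  | trans _ _ ih1 ih2 =>
    intro f hf
    rw [ih1 f hf, ih2 f hf]

lemma s8_DUder_cons (a : ι) (U : Finset ι) (ha : a ∉ U) (hf : ContDiff ℝ (⊤ : ℕ∞) f) :
    DUder (Finset.cons a U ha) v f = dirDeriv (v a) (DUder U v f) :=
  s8_foldrDir_perm (Finset.toList_cons ha) f hf

lemma s8_pderivC_foldrDir (hf : ContDiff ℝ (⊤ : ℕ∞) f) (l : List ι) (i : Fin d) :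
    pderivC i (s8_foldrDir v l f) = s8_foldrDir v l (pderivC i f) := by
  induction l with
  | nil => rfl
  | cons j l ih =>
    show pderivC i (dirDeriv (v j) (s8_foldrDir v l f)) = dirDeriv (v j) (s8_foldrDir v l (pderivC i f))
    rw [s8_pderivC_eq, s8_dirDeriv_swap (s8_contDiff_foldrDir hf l), ← ih]
    rfl

-- polyU

lemma s8_polyU_eq (U : Finset ι) : polyU U v = fun x => ∏ j ∈ U, s8_linC (v j) x := rfl

lemma s8_contDiff_polyU (U : Finset ι) : ContDiff ℝ (⊤ : ℕ∞) (polyU U v) := by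
  rw [s8_polyU_eq]
  exact contDiff_prod fun j _ => s8_contDiff_linC (v j)

lemma s8_polyU_cons (a : ι) (U : Finset ι) (ha : a ∉ U) :
    polyU (Finset.cons a U ha) v = fun x => s8_linC (v a) x * polyU U v x := by
  funext x
  rw [s8_polyU_eq, s8_polyU_eq]
  exact Finset.prod_cons ha

-- factorial bookkeeping

lemma s8_fact_prod (β : Fin d → ℕ) (i : Fin d) :
    (∏ j, Nat.factorial ((β + Pi.single i 1 : Fin d → ℕ) j))
      = (β i + 1) * ∏ j, Nat.factorial (β j) := by
  have hupd : (β + Pi.single i 1 : Fin d → ℕ) = Function.update β i (β i + 1) := by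
    funext j
    by_cases h : j = i
    · subst h; simp
    · simp [Pi.single_eq_of_ne h, Function.update_of_ne h]
  rw [hupd]
  have hcomp : (fun j => Nat.factorial (Function.update β i (β i + 1) j))
      = Function.update (fun j => Nat.factorial (β j)) i (Nat.factorial (β i + 1)) := by
    funext j
    by_cases h : j = i
    · subst h; simp
    · simp [Function.update_of_ne h]
  calc ∏ j, Nat.factorial (Function.update β i (β i + 1) j)
      = ∏ j, Function.update (fun j => Nat.factorial (β j)) i (Nat.factorial (β i + 1)) j :=
        Finset.prod_congr rfl fun j _ => congrFun hcomp j
    _ = Nat.factorial (β i + 1) * ∏ j ∈ Finset.univ \ {i}, Nat.factorial (β j) :=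
        Finset.prod_update_of_mem (Finset.mem_univ i) _ _
    _ = (β i + 1) * ∏ j, Nat.factorial (β j) := by
        rw [Nat.factorial_succ, mul_assoc, ← Finset.erase_eq,
          Finset.mul_prod_erase Finset.univ (fun j => Nat.factorial (β j)) (Finset.mem_univ i)]

lemma s8_coeff (β : Fin d → ℕ) (i : Fin d) :
    (1 / ((∏ j, Nat.factorial ((β + Pi.single i 1 : Fin d → ℕ) j) : ℕ) : ℂ))
        * (((β + Pi.single i 1 : Fin d → ℕ) i : ℕ) : ℂ)
      = 1 / ((∏ j, Nat.factorial (β j) : ℕ) : ℂ) := by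
  have h := s8_fact_prod β i
  have hi : (β + Pi.single i 1 : Fin d → ℕ) i = β i + 1 := by simp
  rw [h, hi]
  have hP : ((∏ j, Nat.factorial (β j) : ℕ) : ℂ) ≠ 0 := by
    rw [Nat.cast_ne_zero]
    exact Finset.prod_ne_zero_iff.mpr fun j _ => Nat.factorial_ne_zero _
  have hb : ((β i + 1 : ℕ) : ℂ) ≠ 0 := by
    exact_mod_cast Nat.succ_ne_zero (β i)
  push_cast at hP hb ⊢
  field_simp

end S8c

/-- formula (14): `∑_{|β|=k} (1/β!) D^β(∏_{v∈U}(x⋅v)) D^β f(t) = D_U f(t)`. -/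
theorem statement8 {d : ℕ} {ι : Type*} (U : Finset ι) (v : ι → Fin d → ℝ)
    (k : ℕ) (hk : U.card = k)
    (f : (Fin d → ℝ) → ℂ) (hf : ContDiff ℝ (⊤ : ℕ∞) f) (t : Fin d → ℝ) :
    ∑ β ∈ Finset.Nat.antidiagonalTuple d k,
      (1 / ((∏ i, Nat.factorial (β i) : ℕ) : ℂ)) * Dmulti β (polyU U v) 0 * Dmulti β f t
      = DUder U v f t := by
  subst hk
  induction U using Finset.cons_induction generalizing f hf t with
  | empty =>
    rw [Finset.card_empty, Finset.Nat.antidiagonalTuple_zero_right, Finset.sum_singleton]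
    have h1 : DUder (∅ : Finset ι) v f = f := by simp [DUder]
    rw [h1, s8_Dmulti_zero, s8_Dmulti_zero]
    simp [polyU]
  | cons a s ha ih =>
    have hq : ContDiff ℝ (⊤ : ℕ∞) (polyU s v) := s8_contDiff_polyU s
    have hDU : ContDiff ℝ (⊤ : ℕ∞) (DUder s v f) := by
      rw [s8_DUder_eq]
      exact s8_contDiff_foldrDir hf _
    have hstep : ∀ i : Fin d, pderivC i (DUder s v f) t
        = ∑ β' ∈ Finset.Nat.antidiagonalTuple d s.card,
            (1 / ((∏ j, Nat.factorial (β' j) : ℕ) : ℂ)) * Dmulti β' (polyU s v) 0 *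
              Dmulti (β' + Pi.single i 1) f t := by
      intro i
      have h1 : pderivC i (DUder s v f) = DUder s v (pderivC i f) := by
        rw [s8_DUder_eq, s8_pderivC_foldrDir hf, ← s8_DUder_eq]
      rw [h1, ← ih (pderivC i f) (s8_contDiff_pderivC hf i) t]
      refine Finset.sum_congr rfl fun β' _ => ?_
      rw [s8_Dmulti_single_add hf β' i]
    have key : ∀ i : Fin d,
        ∑ β ∈ Finset.Nat.antidiagonalTuple d (s.card + 1),
          (1 / ((∏ j, Nat.factorial (β j) : ℕ) : ℂ)) *
            (((β i : ℂ) * (v a i : ℂ)) * Dmulti (β - Pi.single i 1) (polyU s v) 0) *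
            Dmulti β f t
        = (v a i : ℂ) * ∑ β' ∈ Finset.Nat.antidiagonalTuple d s.card,
            (1 / ((∏ j, Nat.factorial (β' j) : ℕ) : ℂ)) * Dmulti β' (polyU s v) 0 *
              Dmulti (β' + Pi.single i 1) f t := by
      intro i
      have hsing : ∑ j, (Pi.single i 1 : Fin d → ℕ) j = 1 := by
        simp [Finset.sum_pi_single']
      rw [Finset.mul_sum]
      rw [← Finset.sum_filter_of_ne
        (p := fun β : Fin d → ℕ => β i ≠ 0) (fun β _ hfne h0 => hfne (by simp [h0]))]
      refine Finset.sum_nbij' (i := fun β => β - Pi.single i 1)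
        (j := fun β' => β' + Pi.single i 1) ?_ ?_ ?_ ?_ ?_
      · intro β hβ
        obtain ⟨h1, h2⟩ := Finset.mem_filter.mp hβ
        rw [Finset.Nat.mem_antidiagonalTuple] at h1 ⊢
        beta_reduce
        have hpt : ∀ j, (β - Pi.single i 1 : Fin d → ℕ) j + (Pi.single i 1 : Fin d → ℕ) j
            = β j := by
          intro j
          by_cases h : j = i
          · subst h
            simp only [Pi.sub_apply, Pi.single_eq_same]
            omega
          · simp [Pi.single_eq_of_ne h]
        have hsum : ∑ j, ((β - Pi.single i 1 : Fin d → ℕ) j + (Pi.single i 1 : Fin d → ℕ) j)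
            = ∑ j, β j := Finset.sum_congr rfl fun j _ => hpt j
        rw [Finset.sum_add_distrib, hsing] at hsum
        omega
      · intro β' hβ'
        rw [Finset.Nat.mem_antidiagonalTuple] at hβ'
        rw [Finset.mem_filter, Finset.Nat.mem_antidiagonalTuple]
        beta_reduce
        constructor
        · have : ∑ j, ((β' j) + (Pi.single i 1 : Fin d → ℕ) j) = s.card + 1 := by
            rw [Finset.sum_add_distrib, hsing, hβ']
          simpa using this
        · simp
      · intro β hβ
        obtain ⟨h1, h2⟩ := Finset.mem_filter.mp hβ
        beta_reduce
        funext j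
        by_cases h : j = i
        · subst h
          simp only [Pi.add_apply, Pi.sub_apply, Pi.single_eq_same]
          omega
        · simp [Pi.single_eq_of_ne h]
      · intro β' hβ'
        beta_reduce
        funext j
        by_cases h : j = i
        · subst h
          simp only [Pi.sub_apply, Pi.add_apply, Pi.single_eq_same]
          omega
        · simp [Pi.single_eq_of_ne h]
      · intro β hβ
        obtain ⟨h1, h2⟩ := Finset.mem_filter.mp hβ
        have hββ : (β - Pi.single i 1 : Fin d → ℕ) + Pi.single i 1 = β := by
          funext j
          by_cases h : j = i
          · subst h
            simp only [Pi.add_apply, Pi.sub_apply, Pi.single_eq_same]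
            omega
          · simp [Pi.single_eq_of_ne h]
        have hc := s8_coeff (β - Pi.single i 1) i
        rw [hββ] at hc
        beta_reduce
        rw [hββ, ← hc]
        ring
    rw [Finset.card_cons, s8_DUder_cons a s ha hf, s8_dirDeriv_apply hDU (v a) t,
      s8_polyU_cons a s ha]
    calc ∑ β ∈ Finset.Nat.antidiagonalTuple d (s.card + 1),
          (1 / ((∏ j, Nat.factorial (β j) : ℕ) : ℂ)) *
            Dmulti β (fun x => s8_linC (v a) x * polyU s v x) 0 * Dmulti β f t
        = ∑ β ∈ Finset.Nat.antidiagonalTuple d (s.card + 1), ∑ i,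
            (1 / ((∏ j, Nat.factorial (β j) : ℕ) : ℂ)) *
              (((β i : ℂ) * (v a i : ℂ)) * Dmulti (β - Pi.single i 1) (polyU s v) 0) *
              Dmulti β f t :=
          Finset.sum_congr rfl fun β _ => by
            rw [s8_Dmulti_linC_mul_zero (v a) hq β, Finset.mul_sum, Finset.sum_mul]
      _ = ∑ i, ∑ β ∈ Finset.Nat.antidiagonalTuple d (s.card + 1),
            (1 / ((∏ j, Nat.factorial (β j) : ℕ) : ℂ)) *
              (((β i : ℂ) * (v a i : ℂ)) * Dmulti (β - Pi.single i 1) (polyU s v) 0) *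
              Dmulti β f t := Finset.sum_comm
      _ = ∑ i, (v a i : ℂ) * ∑ β' ∈ Finset.Nat.antidiagonalTuple d s.card,
            (1 / ((∏ j, Nat.factorial (β' j) : ℕ) : ℂ)) * Dmulti β' (polyU s v) 0 *
              Dmulti (β' + Pi.single i 1) f t := Finset.sum_congr rfl fun i _ => key i
      _ = ∑ i, (v a i : ℂ) * pderivC i (DUder s v f) t :=
          Finset.sum_congr rfl fun i _ => by rw [hstep i]

end
end
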